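/- Fix an integer k ≥ 2. For every ε > 0 there exists n₀ such that for all n ≥ n₀ and every minimal k-SAT formula G on n variables, there is a subset D of at most ε·n^k clauses of G such that G \ D is simple. -/

import Mathlib

section Defs

variable {V W : Type*}

/-- A clause is a finite set of literals; a literal is a variable paired with a polarity
(`true` = positive, `false` = negative). -/
abbrev SatClause (V : Type*) := Finset (V × Bool)

/-- A formula is a finite set of clauses. -/
abbrev SatFormula (V : Type*) := Finset (SatClause V)

/-- The set of variables used by a clause. -/
def clauseVars [DecidableEq V] (C : SatClause V) : Finset V := C.image Prod.fst

/-- A valid `k`-SAT clause: `k` literals on `k` distinct variables. -/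
def IsKClause [DecidableEq V] (k : ℕ) (C : SatClause V) : Prop :=
  C.card = k ∧ (clauseVars C).card = k

/-- A valid `k`-SAT formula. -/
def IsKFormula [DecidableEq V] (k : ℕ) (G : SatFormula V) : Prop :=
  ∀ C ∈ G, IsKClause k C

/-- An assignment satisfies a clause if it makes all of its literals true. -/
def SatisfiesClause (a : V → Bool) (C : SatClause V) : Prop := ∀ l ∈ C, a l.1 = l.2

/-- A formula is minimal if every clause has a witness assignment satisfying it and no other
clause. -/
def MinimalFormula (G : SatFormula V) : Prop :=
  ∀ C ∈ G, ∃ w : V → Bool, SatisfiesClause w C ∧ ∀ C' ∈ G, SatisfiesClause w C' → C' = C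

/-- A formula is simple if no two distinct clauses use the same set of variables. -/
def SimpleFormula [DecidableEq V] (G : SatFormula V) : Prop :=
  ∀ C ∈ G, ∀ C' ∈ G, clauseVars C = clauseVars C' → C = C'

/-- A formula is unate if every variable occurs with only one polarity. -/
def UnateFormula (G : SatFormula V) : Prop :=
  ∀ x : V, ¬ ((∃ C ∈ G, (x, true) ∈ C) ∧ (∃ C ∈ G, (x, false) ∈ C))

/-- The set of variables used by a formula. -/
def formulaVars [DecidableEq V] (G : SatFormula V) : Finset V := G.biUnion clauseVars

/-- `f` is a `k`-SAT function: it is computed by some `k`-SAT formula (value `1` iff some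
clause has all its literals satisfied). -/
def IsKSatFunction (k n : ℕ) (f : (Fin n → Bool) → Bool) : Prop :=
  ∃ G : SatFormula (Fin n), IsKFormula k G ∧
    ∀ a : Fin n → Bool, f a = true ↔ ∃ C ∈ G, SatisfiesClause a C

/-- Relabel the variables of a formula along `φ`. -/
def mapFormula [DecidableEq V] [DecidableEq W] (φ : W → V) (F : SatFormula W) : SatFormula V :=
  F.image (fun C => C.image (fun l => (φ l.1, l.2)))

/-- `G'` is a copy of `F`: it is obtained from `F` by an injective relabeling of variables. -/
def IsCopyOf [DecidableEq V] [DecidableEq W] (F : SatFormula W) (G' : SatFormula V) : Prop :=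
  ∃ φ : W → V, Set.InjOn φ ↑(formulaVars F) ∧ G' = mapFormula φ F

/-- The number of copies of `F` in `G`, i.e. of subformulae of `G` isomorphic to `F`. -/
noncomputable def copyCount [DecidableEq V] [DecidableEq W] (F : SatFormula W)
    (G : SatFormula V) : ℕ :=
  Set.ncard {G' : SatFormula V | G' ⊆ G ∧ IsCopyOf F G'}

/-- The `b`-blowup of a clause: replace each literal by the literal of the same polarity on
one of the `b` duplicates of its variable, in all possible ways. -/
def clauseBlowup [DecidableEq V] (b : ℕ) (C : SatClause V) :
    Finset (SatClause (V × Fin b)) :=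
  (C.pi (fun _ => (Finset.univ : Finset (Fin b)))).image
    (fun g => C.attach.image (fun l => ((l.1.1, g l.1 l.2), l.1.2)))

/-- The `b`-blowup of a formula. -/
def formulaBlowup [DecidableEq V] (b : ℕ) (G : SatFormula V) : SatFormula (V × Fin b) :=
  G.biUnion (clauseBlowup b)

/-- The weight of a formula on `n` variables:
`wt(G) = Σ_i log₂(i+1)·α_i(G)` where `α_i(G)·C(n,k)` counts the `k`-sets of variables
supporting exactly `i` clauses. -/
noncomputable def formulaWt (k n : ℕ) (G : SatFormula (Fin n)) : ℝ :=
  (∑ S ∈ (Finset.univ : Finset (Fin n)).powersetCard k,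
    Real.logb 2 (((G.filter (fun C => clauseVars C = S)).card : ℝ) + 1)) / (n.choose k)

/-- A partially directed graph: a set of undirected edges together with a set of directed
(pointed) edges. -/
structure PDG (V : Type*) where
  undir : Finset (Finset V)
  dir : Finset (Finset V × V)

/-- `H` is a valid `k`-PDG: all edges have `k` vertices, each directed edge is pointed at one
of its vertices, and each `k`-set carries at most one edge (undirected or directed). -/
def PDG.IsValid (k : ℕ) (H : PDG V) : Prop :=
  (∀ e ∈ H.undir, e.card = k) ∧
  (∀ p ∈ H.dir, p.1.card = k ∧ p.2 ∈ p.1) ∧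
  (∀ p ∈ H.dir, p.1 ∉ H.undir) ∧
  (∀ p ∈ H.dir, ∀ q ∈ H.dir, p.1 = q.1 → p = q)

/-- `F` is a subgraph of `H`: a copy of `F` can be obtained from `H` by deleting vertices,
deleting edges, and/or forgetting directions of edges. -/
def PDG.IsSubgraph [DecidableEq V] (F : PDG W) (H : PDG V) : Prop :=
  ∃ φ : W → V, Function.Injective φ ∧
    (∀ e ∈ F.undir, e.image φ ∈ H.undir ∨ ∃ v, (e.image φ, v) ∈ H.dir) ∧
    (∀ p ∈ F.dir, (p.1.image φ, φ p.2) ∈ H.dir)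

/-- The image of a PDG under a relabeling of vertices. -/
def PDG.map [DecidableEq V] (φ : W → V) (F : PDG W) : PDG V :=
  ⟨F.undir.image (Finset.image φ), F.dir.image (fun p => (p.1.image φ, φ p.2))⟩

/-- The PDG `T_k` on vertex set `{0, …, k}` (0-indexed): undirected edges everything-but-`k`
and everything-but-`k-2`, and the edge everything-but-`k-1` directed toward `k`. -/
def TkPDG (k : ℕ) : PDG (Fin (k + 1)) where
  undir := { Finset.univ.erase ⟨k, Nat.lt_succ_self k⟩,
             Finset.univ.erase ⟨k - 2, by omega⟩ }
  dir := { (Finset.univ.erase ⟨k - 1, by omega⟩, ⟨k, Nat.lt_succ_self k⟩) }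

/-- A semisimple formula: every `k`-set of variables supports at most one clause, or exactly
two clauses whose polarities differ on exactly one variable. -/
def SemisimpleFormula [DecidableEq V] (G : SatFormula V) : Prop :=
  ∀ C₁ ∈ G, ∀ C₂ ∈ G, C₁ ≠ C₂ → clauseVars C₁ = clauseVars C₂ →
    (((C₁ \ C₂).image Prod.fst).card = 1 ∧
      ∀ C₃ ∈ G, clauseVars C₃ = clauseVars C₁ → C₃ = C₁ ∨ C₃ = C₂)

/-- The type of a (semisimple) formula: an undirected edge on each variable set supporting
exactly one clause, and for each variable set supporting two clauses a directed edge pointed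
at the variable where the two clauses differ. -/
def formulaType [DecidableEq V] (G : SatFormula V) : PDG V where
  undir := (G.filter (fun C => ∀ C' ∈ G, clauseVars C' = clauseVars C → C' = C)).image
    clauseVars
  dir := ((G ×ˢ G).filter (fun p => p.1 ≠ p.2 ∧ clauseVars p.1 = clauseVars p.2)).biUnion
    (fun p => ((p.1 \ p.2).image Prod.fst).image (fun v => (clauseVars p.1, v)))

end Defs

/-!
Every clause sharing its variable set with another clause is `tupleClause u p` for an injective
tuple `u ∈ doubleTuples G p q` with `q ≠ p`, so it suffices to show that each of the `4 ^ k`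
pairs `(p, q)` has `o(n ^ k)` such tuples. Otherwise supersaturation (Cauchy–Schwarz on common
fibres, inducting on `k`) gives a box `∏ i, {v i 0, v i 1}` of them. The witness `w` of the
`p`-clause on the corner `v · 0` cannot satisfy the `p`-clause on any other corner, so
`w (v i 1) ≠ p i` for every `i`. Hence `w` also satisfies the `q`-clause on the corner that uses
`v i 1` exactly where `p i ≠ q i`, which contradicts minimality.
-/

open Finset Function Fintype

universe u

section TupleClause

variable {V : Type*} [DecidableEq V] {k : ℕ}

def tupleClause (u : Fin k → V) (p : Fin k → Bool) : SatClause V :=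
  univ.image fun i => (u i, p i)

@[simp]
lemma mem_tupleClause {u : Fin k → V} {p : Fin k → Bool} {l : V × Bool} :
    l ∈ tupleClause u p ↔ ∃ i, (u i, p i) = l := by
  simp [tupleClause]

lemma clauseVars_tupleClause (u : Fin k → V) (p : Fin k → Bool) :
    clauseVars (tupleClause u p) = univ.image u := by
  simp [clauseVars, tupleClause, image_image, comp_def]

lemma satisfiesClause_tupleClause {w : V → Bool} {u : Fin k → V} {p : Fin k → Bool} :
    SatisfiesClause w (tupleClause u p) ↔ ∀ i, w (u i) = p i := by
  simp [SatisfiesClause]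

lemma IsKClause.injOn_fst {C : SatClause V} (hC : IsKClause k C) :
    Set.InjOn Prod.fst (C : Set (V × Bool)) :=
  card_image_iff.1 (hC.2.trans hC.1.symm)

lemma exists_eq_tupleClause {C : SatClause V} (hC : Set.InjOn Prod.fst (C : Set (V × Bool)))
    {u : Fin k → V} (hu : univ.image u = clauseVars C) : ∃ p, C = tupleClause u p := by
  have hlit : ∀ i, ∃ b, (u i, b) ∈ C := fun i => by
    have : u i ∈ clauseVars C := hu ▸ mem_image_of_mem u (mem_univ i)
    simpa [clauseVars] using this
  choose p hp using hlit
  refine ⟨p, Finset.ext fun l => ⟨fun hl => ?_, ?_⟩⟩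
  · have hl' : l.1 ∈ univ.image u := hu ▸ mem_image_of_mem Prod.fst hl
    obtain ⟨i, -, hi⟩ := mem_image.1 hl'
    exact mem_tupleClause.2 ⟨i, hC (hp i) hl hi⟩
  · rw [mem_tupleClause]
    rintro ⟨i, rfl⟩
    exact hp i

lemma exists_injective_image_univ_eq {s : Finset V} (hs : #s = k) :
    ∃ u : Fin k → V, Injective u ∧ univ.image u = s := by
  set e := s.equivFinOfCardEq hs
  refine ⟨fun i => e.symm i, Subtype.val_injective.comp e.symm.injective, ?_⟩
  ext x
  simp only [mem_image, mem_univ, true_and]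
  exact ⟨fun ⟨i, hi⟩ => hi ▸ (e.symm i).2, fun hx => ⟨e ⟨x, hx⟩, by simp⟩⟩

def nonsimplePart (G : SatFormula V) : SatFormula V :=
  {C ∈ G | ∃ C' ∈ G, C' ≠ C ∧ clauseVars C' = clauseVars C}

lemma simpleFormula_sdiff_nonsimplePart (G : SatFormula V) :
    SimpleFormula (G \ nonsimplePart G) := by
  intro C hC C' hC' hvars
  by_contra hne
  simp only [nonsimplePart, mem_sdiff, mem_filter, not_and, not_exists] at hC hC'
  exact hC.2 hC.1 C' hC'.1 (Ne.symm hne) hvars.symm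

end TupleClause

section CommonFiber

variable {α β : Type*} [Fintype α] [DecidableEq α] [Fintype β] [DecidableEq β]

lemma card_eq_sum_card_fiber (T : Finset (α × β)) : #T = ∑ b, #{x | (x, b) ∈ T} := by
  simp only [card_filter]
  rw [sum_comm, ← Fintype.sum_prod_type', ← card_filter, filter_mem_eq_inter, univ_inter]

lemma sum_card_common_fiber (T : Finset (α × β)) :
    ∑ z : α × α, #{b | (z.1, b) ∈ T ∧ (z.2, b) ∈ T} =
      ∑ b, #{x | (x, b) ∈ T} ^ 2 := by
  have hfib (b : β) :
      #{z : α × α | (z.1, b) ∈ T ∧ (z.2, b) ∈ T} = #{x | (x, b) ∈ T} ^ 2 := by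
    rw [sq, ← card_product]
    congr 1
    ext z
    simp
  have := sum_card_bipartiteAbove_eq_sum_card_bipartiteBelow
    (fun (b : β) (z : α × α) => (z.1, b) ∈ T ∧ (z.2, b) ∈ T) (s := univ) (t := univ)
  simp only [bipartiteAbove, bipartiteBelow, hfib] at this
  exact this.symm

lemma exists_ne_le_card_common_fiber {ε : ℝ} [Nonempty β] (hε : 0 ≤ ε)
    (T : Finset (α × β)) (hT : ε * card α * card β ≤ #T) (hα : 2 < ε ^ 2 * card α) :
    ∃ x y, x ≠ y ∧ ε ^ 2 / 2 * card β ≤ #{b | (x, b) ∈ T ∧ (y, b) ∈ T} := by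
  set c : α × α → ℝ := fun z => #{b | (z.1, b) ∈ T ∧ (z.2, b) ∈ T}
  set Q := ∑ b, (#{x | (x, b) ∈ T} : ℝ) ^ 2
  have hB : (0 : ℝ) < card β := by exact_mod_cast Fintype.card_pos
  have hA : (0 : ℝ) < card α := by nlinarith
  have hQ : ε ^ 2 * card α ^ 2 * card β ≤ Q := by
    have hCS := sq_sum_le_card_mul_sum_sq (s := univ) (f := fun b => (#{x | (x, b) ∈ T} : ℝ))
    have hT' : (ε * card α * card β) ^ 2 ≤ (#T : ℝ) ^ 2 := by gcongr
    rw [card_eq_sum_card_fiber, Nat.cast_sum] at hT'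
    rw [card_univ] at hCS
    nlinarith
  have hsplit : Q = ∑ z ∈ (univ : Finset α).diag, c z + ∑ z ∈ univ.offDiag, c z := by
    rw [← sum_union (disjoint_diag_offDiag _), diag_union_offDiag, univ_product_univ]
    simp only [Q, c]
    exact_mod_cast (sum_card_common_fiber T).symm
  have hdiag : ∑ z ∈ (univ : Finset α).diag, c z ≤ card α * card β :=
    calc ∑ z ∈ (univ : Finset α).diag, c z
        ≤ ∑ _z ∈ (univ : Finset α).diag, (card β : ℝ) :=
          sum_le_sum fun z _ => by simp only [c]; exact_mod_cast card_le_univ _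
      _ = card α * card β := by rw [sum_const, diag_card, card_univ, nsmul_eq_mul]
  have hoff : (#(univ : Finset α).offDiag : ℝ) ≤ card α ^ 2 := by
    rw [offDiag_card, card_univ, sq]
    exact_mod_cast Nat.sub_le _ _
  have hlt : ∑ _z ∈ (univ : Finset α).offDiag, ε ^ 2 / 2 * card β <
      ∑ z ∈ (univ : Finset α).offDiag, c z := by
    rw [sum_const, nsmul_eq_mul]
    have hoff' := mul_le_mul_of_nonneg_right hoff (by positivity : 0 ≤ ε ^ 2 / 2 * card β)
    nlinarith [mul_pos hA hB]
  obtain ⟨z, hz, hlt⟩ := exists_lt_of_sum_lt hlt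
  exact ⟨z.1, z.2, (mem_offDiag.1 hz).2.2, hlt.le⟩

end CommonFiber

theorem exists_box_of_le_card (k : ℕ) {ε : ℝ} (hε : 0 < ε) :
    ∃ n₀ : ℕ, ∀ (α : Type u) [Fintype α] [DecidableEq α], n₀ ≤ card α →
      ∀ T : Finset (Fin k → α), ε * card α ^ k ≤ #T →
        ∃ v : Fin k → Fin 2 → α, (∀ i, v i 0 ≠ v i 1) ∧
          ∀ σ : Fin k → Fin 2, (fun i => v i (σ i)) ∈ T := by
  induction k generalizing ε with
  | zero =>
    refine ⟨0, fun α _ _ _ T hT => ?_⟩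
    have hT : (0 : ℝ) < #T := hε.trans_le (by simpa using hT)
    obtain ⟨u, hu⟩ : T.Nonempty := card_pos.1 (by exact_mod_cast hT)
    exact ⟨finZeroElim, finZeroElim, fun _ => by convert hu⟩
  | succ k ih =>
    obtain ⟨m₀, hm₀⟩ := ih (ε := ε ^ 2 / 2) (by positivity)
    refine ⟨max m₀ (⌊2 / ε ^ 2⌋₊ + 1), fun α _ _ hα T hT => ?_⟩
    have hαε : 2 < ε ^ 2 * card α := by
      have hfloor : (⌊2 / ε ^ 2⌋₊ + 1 : ℝ) ≤ card α := by
        exact_mod_cast (le_max_right _ _).trans hα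
      have := (Nat.lt_floor_add_one (2 / ε ^ 2)).trans_le hfloor
      rwa [div_lt_iff₀' (by positivity)] at this
    have hA : (0 : ℝ) < card α := by nlinarith [sq_nonneg ε]
    have : Nonempty α := card_pos_iff.1 (by exact_mod_cast hA)
    set e := Fin.consEquiv fun _ : Fin (k + 1) => α
    obtain ⟨x, y, hxy, hS⟩ := exists_ne_le_card_common_fiber hε.le (T.map e.symm.toEmbedding)
      (by simpa [pow_succ', mul_assoc] using hT) hαε
    obtain ⟨v, hv, hbox⟩ := hm₀ α ((le_max_left _ _).trans hα) _ (by simpa using hS)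
    refine ⟨Fin.cons ![x, y] v, fun i => Fin.cases hxy hv i, fun σ => ?_⟩
    obtain ⟨hx, hy⟩ := (mem_filter.1 (hbox (Fin.tail σ))).2
    have hcons : (fun i => (Fin.cons ![x, y] v : Fin (k + 1) → Fin 2 → α) i (σ i)) =
        e (![x, y] (σ 0), fun i => v i (Fin.tail σ i)) := by
      funext i
      cases i using Fin.cases <;> rfl
    obtain h | h : σ 0 = 0 ∨ σ 0 = 1 := by omega
    all_goals simpa [hcons, h]

section Minimal

variable {V : Type*} [DecidableEq V] {k : ℕ}

theorem MinimalFormula.not_forall_tupleClause_mem {G : SatFormula V} (hG : MinimalFormula G)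
    {p q : Fin k → Bool} (hpq : p ≠ q) {v : Fin k → Fin 2 → V} (hv : ∀ i, v i 0 ≠ v i 1)
    (hinj : ∀ σ : Fin k → Fin 2, Injective fun i => v i (σ i)) :
    ¬ ∀ σ : Fin k → Fin 2,
      tupleClause (fun i => v i (σ i)) p ∈ G ∧ tupleClause (fun i => v i (σ i)) q ∈ G := by
  intro hmem
  have hvne : ∀ i j, v j 0 ≠ v i 1 := by
    intro i j
    rcases eq_or_ne j i with rfl | hji
    · exact hv j
    · simpa [Pi.single_apply, hji] using (hinj (Pi.single i 1)).ne hji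
  obtain ⟨w, hw, hwuniq⟩ := hG _ (hmem 0).1
  simp only [satisfiesClause_tupleClause, Pi.zero_apply] at hw
  have heq_zero : ∀ (σ : Fin k → Fin 2) r, tupleClause (fun i => v i (σ i)) r ∈ G →
      SatisfiesClause w (tupleClause (fun i => v i (σ i)) r) → σ = 0 := by
    intro σ r hσ hsat
    have hvars := congrArg clauseVars (hwuniq _ hσ hsat)
    rw [clauseVars_tupleClause, clauseVars_tupleClause] at hvars
    funext i
    by_contra hi
    have : v i 1 ∈ univ.image fun j => v j 0 := by
      rw [← Fin.eq_one_of_ne_zero _ hi]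
      exact hvars ▸ mem_image_of_mem _ (mem_univ i)
    obtain ⟨j, -, hj⟩ := mem_image.1 this
    exact hvne i j hj
  have hflip : ∀ i, w (v i 1) ≠ p i := by
    intro i hi
    have hsat : SatisfiesClause w
        (tupleClause (fun j => v j ((Pi.single i 1 : Fin k → Fin 2) j)) p) := by
      rw [satisfiesClause_tupleClause]
      intro j
      rcases eq_or_ne j i with rfl | hji
      · simpa using hi
      · simpa [Pi.single_apply, hji] using hw j
    simpa using congrFun (heq_zero _ _ (hmem _).1 hsat) i
  let σ : Fin k → Fin 2 := fun i => if p i = q i then 0 else 1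
  have hsat : SatisfiesClause w (tupleClause (fun i => v i (σ i)) q) := by
    rw [satisfiesClause_tupleClause]
    intro i
    by_cases h : p i = q i
    · simpa [σ, h] using hw i
    · have := hflip i
      simp only [σ, h, if_false]
      revert this h
      cases w (v i 1) <;> cases p i <;> cases q i <;> simp
  exact hpq (funext fun i => by
    by_contra h
    simpa [σ, h] using congrFun (heq_zero _ _ (hmem σ).2 hsat) i)

end Minimal

section Counting

variable {V : Type*} [Fintype V] [DecidableEq V] {k : ℕ}

def doubleTuples (G : SatFormula V) (p q : Fin k → Bool) : Finset (Fin k → V) :=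
  {u | Injective u ∧ tupleClause u p ∈ G ∧ tupleClause u q ∈ G}

theorem card_doubleTuples_lt (k : ℕ) {ε : ℝ} (hε : 0 < ε) :
    ∃ n₀ : ℕ, ∀ (V : Type u) [Fintype V] [DecidableEq V], n₀ ≤ card V →
      ∀ G : SatFormula V, MinimalFormula G → ∀ p q : Fin k → Bool, p ≠ q →
        #(doubleTuples G p q) < ε * card V ^ k := by
  obtain ⟨n₀, hn₀⟩ := exists_box_of_le_card k hε
  refine ⟨n₀, fun V _ _ hV G hG p q hpq => lt_of_not_ge fun hT => ?_⟩
  obtain ⟨v, hv, hbox⟩ := hn₀ V hV _ hT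
  simp only [doubleTuples, mem_filter, mem_univ, true_and] at hbox
  exact hG.not_forall_tupleClause_mem hpq hv (fun σ => (hbox σ).1) fun σ => (hbox σ).2

lemma card_nonsimplePart_le {G : SatFormula V} (hG : IsKFormula k G) :
    #(nonsimplePart G) ≤ ∑ pq ∈ (univ : Finset (Fin k → Bool)).offDiag,
      #(doubleTuples G pq.1 pq.2) := by
  have hsub : nonsimplePart G ⊆ (univ : Finset (Fin k → Bool)).offDiag.biUnion
      fun pq => (doubleTuples G pq.1 pq.2).image (tupleClause · pq.1) := by
    intro C hC
    obtain ⟨hCG, C', hC'G, hne, hvars⟩ := mem_filter.1 hC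
    obtain ⟨u, hinj, hu⟩ := exists_injective_image_univ_eq (hG C hCG).2
    obtain ⟨p, rfl⟩ := exists_eq_tupleClause (hG C hCG).injOn_fst hu
    obtain ⟨q, rfl⟩ := exists_eq_tupleClause (hG C' hC'G).injOn_fst (hu.trans hvars.symm)
    refine mem_biUnion.2 ⟨(p, q), ?_, mem_image.2 ⟨u, ?_, rfl⟩⟩
    · exact mem_offDiag.2 ⟨mem_univ _, mem_univ _, fun h => hne (congrArg _ h.symm)⟩
    · simp [doubleTuples, hinj, hCG, hC'G]
  exact (card_le_card hsub).trans (card_biUnion_le.trans (sum_le_sum fun _ _ => card_image_le))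

lemma card_offDiag_univ_fin_bool_le (k : ℕ) :
    #(univ : Finset (Fin k → Bool)).offDiag ≤ 4 ^ k := by
  rw [offDiag_card, card_univ, Fintype.card_fun, Fintype.card_bool, Fintype.card_fin]
  exact (Nat.sub_le _ _).trans_eq (by rw [← mul_pow]; norm_num)

end Counting

theorem minimal_nearly_simple_general (k : ℕ) (ε : ℝ) (hε : 0 < ε) :
    ∃ n₀ : ℕ, ∀ n ≥ n₀, ∀ G : SatFormula (Fin n), IsKFormula k G → MinimalFormula G →
      ∃ D ⊆ G, (D.card : ℝ) ≤ ε * n ^ k ∧ SimpleFormula (G \ D) := by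
  obtain ⟨n₀, hn₀⟩ := card_doubleTuples_lt k (ε := ε / 4 ^ k) (by positivity)
  refine ⟨n₀, fun n hn G hG hmin => ⟨nonsimplePart G, filter_subset _ _, ?_,
    simpleFormula_sdiff_nonsimplePart G⟩⟩
  have hpairs : (#(univ : Finset (Fin k → Bool)).offDiag : ℝ) ≤ 4 ^ k := by
    exact_mod_cast card_offDiag_univ_fin_bool_le k
  calc (#(nonsimplePart G) : ℝ)
      ≤ ∑ pq ∈ (univ : Finset (Fin k → Bool)).offDiag,
          (#(doubleTuples G pq.1 pq.2) : ℝ) := by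
        exact_mod_cast card_nonsimplePart_le hG
    _ ≤ ∑ _pq ∈ (univ : Finset (Fin k → Bool)).offDiag, ε / 4 ^ k * n ^ k :=
        sum_le_sum fun pq hpq => by
          simpa using (hn₀ (Fin n) (by simpa using hn) G hmin _ _ (mem_offDiag.1 hpq).2.2).le
    _ ≤ 4 ^ k * (ε / 4 ^ k * n ^ k) := by
        rw [sum_const, nsmul_eq_mul]
        gcongr
    _ = ε * n ^ k := by field_simp

/-- Fix `k ≥ 2`. For every `ε > 0` there is `n₀` such that for all
`n ≥ n₀`, every minimal `k`-SAT formula on `n` variables can be made simple by deleting at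
most `ε·n^k` clauses. -/
theorem minimal_nearly_simple (k : ℕ) (hk : 2 ≤ k) (ε : ℝ) (hε : 0 < ε) :
    ∃ n₀ : ℕ, ∀ n ≥ n₀, ∀ G : SatFormula (Fin n), IsKFormula k G → MinimalFormula G →
      ∃ D ⊆ G, (D.card : ℝ) ≤ ε * n ^ k ∧ SimpleFormula (G \ D) :=
  minimal_nearly_simple_general k ε hε
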